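/- Fix integers 0 ≤ k ≤ n and a tuple of nonnegative integers (i₁,…,i_k). Let Sq : ℚ[α₁,…,αₙ] → ℚ[α₁,…,αₙ] be the ℚ-algebra endomorphism with Sq(α_l) = α_l², and let Sq̂ be the induced field embedding of the fraction field Frac(ℚ[α₁,…,αₙ]) into itself (Sq is injective). Then in the fraction field, Σ_{S∈𝒮} ( ∏_{l=1}^{k} e_l((αᵢ²)_{i∈S})^{i_l} ) / ( ∏_{i∈S} ∏_{j∉S} (αⱼ² − αᵢ²) ) = Sq̂( Σ_{S∈𝒮} ( ∏_{l=1}^{k} e_l((αᵢ)_{i∈S})^{i_l} ) / ( ∏_{i∈S} ∏_{j∉S} (αⱼ − αᵢ) ) ), where both sums range over all k-element subsets S of {1,…,n} and e_l denotes the l-th elementary symmetric polynomial of the variables indexed by S. In particular the left-hand side lies in the image of ℚ[α₁,…,αₙ] in its fraction field. -/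
import Mathlib


open MvPolynomial Finset

/-- The squaring substitution `Sq`, the `ℚ`-algebra endomorphism of `ℚ[α₁,…,αₙ]`
with `Sq(α_l) = α_l²`. -/
noncomputable def Sq (n : ℕ) :
    MvPolynomial (Fin n) ℚ →ₐ[ℚ] MvPolynomial (Fin n) ℚ :=
  aeval fun l => X l ^ 2

/-- The ABBV localization sum for the equivariant Pontryagin number
`∫_{G_{2k}(ℝ^{2n})} (p^T)^I`, with `e_l` evaluated on the squared variables. -/
noncomputable def pontLocSum (n k : ℕ) (i : Fin k → ℕ) :
    FractionRing (MvPolynomial (Fin n) ℚ) :=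
  ∑ S ∈ Finset.powersetCard k (Finset.univ : Finset (Fin n)),
    (algebraMap (MvPolynomial (Fin n) ℚ) (FractionRing (MvPolynomial (Fin n) ℚ))
      (∏ l : Fin k, (∑ T ∈ S.powersetCard (l.1 + 1), ∏ m ∈ T, (X m) ^ 2) ^ (i l))) /
    (algebraMap (MvPolynomial (Fin n) ℚ) (FractionRing (MvPolynomial (Fin n) ℚ))
      (∏ a ∈ S, ∏ b ∈ Finset.univ \ S, ((X b) ^ 2 - (X a) ^ 2)))

/-- The ABBV localization sum for the equivariant Chern number `∫_{G_k(ℂⁿ)} (c^T)^I`. -/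
noncomputable def chernLocSum (n k : ℕ) (i : Fin k → ℕ) :
    FractionRing (MvPolynomial (Fin n) ℚ) :=
  ∑ S ∈ Finset.powersetCard k (Finset.univ : Finset (Fin n)),
    (algebraMap (MvPolynomial (Fin n) ℚ) (FractionRing (MvPolynomial (Fin n) ℚ))
      (∏ l : Fin k, (∑ T ∈ S.powersetCard (l.1 + 1), ∏ m ∈ T, X m) ^ (i l))) /
    (algebraMap (MvPolynomial (Fin n) ℚ) (FractionRing (MvPolynomial (Fin n) ℚ))
      (∏ a ∈ S, ∏ b ∈ Finset.univ \ S, (X b - X a)))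


variable {n : ℕ}

/-- substitute `X j := X i` -/
noncomputable def fsub (i j : Fin n) : MvPolynomial (Fin n) ℚ →ₐ[ℚ] MvPolynomial (Fin n) ℚ :=
  aeval fun m => if m = j then X i else X m

lemma fsub_X_self (i j : Fin n) : fsub i j (X j) = X i := by simp [fsub]

lemma fsub_X (i j m : Fin n) (h : m ≠ j) : fsub i j (X m) = X m := by simp [fsub, h]

lemma fsub_rename_swap (i j : Fin n) (p : MvPolynomial (Fin n) ℚ) :
    fsub i j (rename (Equiv.swap i j) p) = fsub i j p := by
  rw [fsub, aeval_rename]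
  have hfun : ((fun m => if m = j then X i else X m) ∘ ⇑(Equiv.swap i j))
      = fun m => if m = j then (X i : MvPolynomial (Fin n) ℚ) else X m := by
    funext m
    simp only [Function.comp_apply]
    rcases eq_or_ne m i with rfl | hmi
    · rw [Equiv.swap_apply_left]
      rcases eq_or_ne m j with rfl | hij
      · simp
      · simp [hij]
    · rcases eq_or_ne m j with rfl | hmj
      · rw [Equiv.swap_apply_right]
        rcases eq_or_ne i m with rfl | hij
        · simp
        · simp [hij]
      · rw [Equiv.swap_apply_of_ne_of_ne hmi hmj]
  rw [hfun]

lemma key_dvd (i j : Fin n) (p : MvPolynomial (Fin n) ℚ) :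
    (X j - X i) ∣ p - fsub i j p := by
  induction p using MvPolynomial.induction_on with
  | C a => simp [fsub]
  | add p q hp hq =>
    have : p + q - fsub i j (p + q) = (p - fsub i j p) + (q - fsub i j q) := by
      rw [map_add]; ring
    rw [this]; exact dvd_add hp hq
  | mul_X p m hp =>
    have : p * X m - fsub i j (p * X m)
        = (p - fsub i j p) * X m + fsub i j p * (X m - fsub i j (X m)) := by
      rw [map_mul]; ring
    rw [this]
    refine dvd_add (hp.mul_right _) (Dvd.dvd.mul_left ?_ _)
    rcases eq_or_ne m j with rfl | hmj
    · rw [fsub_X_self]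
    · rw [fsub_X i j m hmj, sub_self]
      exact dvd_zero _

lemma dvd_of_fsub_eq_zero {i j : Fin n} {p : MvPolynomial (Fin n) ℚ}
    (h : fsub i j p = 0) : (X j - X i) ∣ p := by
  have := key_dvd i j p
  rwa [h, sub_zero] at this

lemma fsub_eq_zero_of_dvd {i j : Fin n} (hij : i ≠ j) {p : MvPolynomial (Fin n) ℚ}
    (h : (X j - X i) ∣ p) : fsub i j p = 0 := by
  obtain ⟨c, rfl⟩ := h
  rw [map_mul, map_sub, fsub_X_self, fsub_X i j i hij, sub_self, zero_mul]

lemma X_sub_ne_zero_p {i j : Fin n} (hij : i ≠ j) : (X j - X i : MvPolynomial (Fin n) ℚ) ≠ 0 :=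
  sub_ne_zero.mpr ((X_injective).ne hij.symm)

lemma prime_X_sub_p {i j : Fin n} (hij : i ≠ j) : Prime (X j - X i : MvPolynomial (Fin n) ℚ) := by
  refine ⟨X_sub_ne_zero_p hij, ?_, ?_⟩
  · intro h
    have h2 := h.map (fsub i j)
    rw [fsub_eq_zero_of_dvd hij dvd_rfl] at h2
    exact not_isUnit_zero h2
  · intro a b hab
    have h0 : fsub i j a * fsub i j b = 0 := by
      have := fsub_eq_zero_of_dvd hij hab
      rwa [map_mul] at this
    rcases mul_eq_zero.mp h0 with h | h
    · exact Or.inl (dvd_of_fsub_eq_zero h)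
    · exact Or.inr (dvd_of_fsub_eq_zero h)

lemma not_dvd_X_sub_p {a b c d : Fin n} (hab : a ≠ b) (hcd : c ≠ d)
    (h1 : ¬(c = a ∧ d = b)) (h2 : ¬(c = b ∧ d = a)) :
    ¬ ((X b - X a : MvPolynomial (Fin n) ℚ) ∣ (X d - X c)) := by
  intro hdvd
  obtain ⟨e, hea, heb, hecd⟩ : ∃ e : Fin n, e ≠ a ∧ e ≠ b ∧ (e = c ∨ e = d) := by
    by_cases hca : c = a
    · by_cases hdb : d = b
      · exact absurd ⟨hca, hdb⟩ h1
      · exact ⟨d, fun h => hcd (hca.trans h.symm), hdb, Or.inr rfl⟩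
    · by_cases hcb : c = b
      · exact ⟨d, fun h => h2 ⟨hcb, h⟩, fun h => hcd (hcb.trans h.symm), Or.inr rfl⟩
      · exact ⟨c, hca, hcb, Or.inl rfl⟩
  set v : Fin n → ℚ := fun x => if x = e then 1 else 0 with hv
  have h0 : eval v (X b - X a) = 0 := by
    simp [hv, (Ne.symm hea), (Ne.symm heb), eval_X]
  have h1' : eval v (X d - X c) ≠ 0 := by
    rcases hecd with rfl | rfl
    · have : d ≠ e := fun h => hcd h.symm
      simp [hv, this]
    · have : c ≠ e := hcd
      simp [hv, this]
  have := map_dvd (eval v) hdvd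
  rw [h0] at this
  exact h1' (zero_dvd_iff.mp this)

lemma prod_primes_dvd_p {ι : Type*} [DecidableEq ι] {s : Finset ι}
    {p : ι → MvPolynomial (Fin n) ℚ} {m : MvPolynomial (Fin n) ℚ}
    (hp : ∀ i ∈ s, Prime (p i))
    (hnd : ∀ i ∈ s, ∀ j ∈ s, i ≠ j → ¬ p i ∣ p j)
    (hd : ∀ i ∈ s, p i ∣ m) : (∏ i ∈ s, p i) ∣ m := by
  induction s using Finset.induction_on generalizing m with
  | empty => simpa using one_dvd m
  | @insert a s ha ih =>
    rw [Finset.prod_insert ha]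
    obtain ⟨m', rfl⟩ := hd a (mem_insert_self a s)
    refine mul_dvd_mul_left _ (ih (fun i hi => hp i (mem_insert_of_mem hi))
      (fun i hi j hj hij => hnd i (mem_insert_of_mem hi) j (mem_insert_of_mem hj) hij) ?_)
    intro i hi
    have hia : i ≠ a := fun h => ha (h ▸ hi)
    have := hd i (mem_insert_of_mem hi)
    rcases (hp i (mem_insert_of_mem hi)).dvd_or_dvd this with h | h
    · exact absurd h (hnd i (mem_insert_of_mem hi) a (mem_insert_self a s) hia)
    · exact h

noncomputable def Vband (n : ℕ) : MvPolynomial (Fin n) ℚ :=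
  ∏ p ∈ Finset.univ.filter (fun p : Fin n × Fin n => p.1 < p.2), (X p.2 - X p.1)

noncomputable def Dband (S : Finset (Fin n)) : MvPolynomial (Fin n) ℚ :=
  ∏ p ∈ S ×ˢ (Finset.univ \ S), (X p.2 - X p.1)

lemma Dband_eq (S : Finset (Fin n)) :
    Dband S = ∏ a ∈ S, ∏ b ∈ Finset.univ \ S, (X b - X a) := by
  rw [Dband, Finset.prod_product]

lemma Vband_ne_zero : (Vband n) ≠ 0 := by
  rw [Vband]
  refine Finset.prod_ne_zero_iff.mpr fun p hp => ?_
  exact X_sub_ne_zero_p (Finset.mem_filter.mp hp).2.ne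

lemma Dband_ne_zero (S : Finset (Fin n)) : Dband S ≠ 0 := by
  rw [Dband]
  refine Finset.prod_ne_zero_iff.mpr fun p hp => ?_
  obtain ⟨h1, h2⟩ := Finset.mem_product.mp hp
  exact X_sub_ne_zero_p fun h => (Finset.mem_sdiff.mp h2).2 (h ▸ h1)

lemma X_sub_dvd_Vband {i j : Fin n} (hij : i ≠ j) :
    (X j - X i : MvPolynomial (Fin n) ℚ) ∣ Vband n := by
  rw [Vband]
  rcases lt_or_gt_of_ne hij with h | h
  · have hm : (i, j) ∈ Finset.univ.filter (fun p : Fin n × Fin n => p.1 < p.2) := by simp [h]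
    have h2 := Finset.dvd_prod_of_mem
      (fun p : Fin n × Fin n => (X p.2 - X p.1 : MvPolynomial (Fin n) ℚ)) hm
    simpa using h2
  · rw [← neg_sub (X i : MvPolynomial (Fin n) ℚ) (X j), neg_dvd]
    have hm : (j, i) ∈ Finset.univ.filter (fun p : Fin n × Fin n => p.1 < p.2) := by simp [h]
    have h2 := Finset.dvd_prod_of_mem
      (fun p : Fin n × Fin n => (X p.2 - X p.1 : MvPolynomial (Fin n) ℚ)) hm
    simpa using h2

lemma Dband_dvd_Vband (S : Finset (Fin n)) : Dband S ∣ Vband n := by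
  rw [Dband]
  refine prod_primes_dvd_p (fun p hp => ?_) (fun p hp q hq hpq => ?_) (fun p hp => ?_)
  · obtain ⟨h1, h2⟩ := Finset.mem_product.mp hp
    exact prime_X_sub_p fun h => (Finset.mem_sdiff.mp h2).2 (h ▸ h1)
  · obtain ⟨h1, h2⟩ := Finset.mem_product.mp hp
    obtain ⟨h3, h4⟩ := Finset.mem_product.mp hq
    have hne1 : p.1 ≠ p.2 := fun h => (Finset.mem_sdiff.mp h2).2 (h ▸ h1)
    have hne2 : q.1 ≠ q.2 := fun h => (Finset.mem_sdiff.mp h4).2 (h ▸ h3)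
    refine not_dvd_X_sub_p hne1 hne2 ?_ ?_
    · rintro ⟨ha, hb⟩
      exact hpq (Prod.ext ha hb).symm
    · rintro ⟨ha, hb⟩
      exact (Finset.mem_sdiff.mp h2).2 (ha ▸ h3)
  · obtain ⟨h1, h2⟩ := Finset.mem_product.mp hp
    exact X_sub_dvd_Vband fun h => (Finset.mem_sdiff.mp h2).2 (h ▸ h1)

noncomputable def rS (S : Finset (Fin n)) : MvPolynomial (Fin n) ℚ :=
  (Dband_dvd_Vband S).choose

lemma rS_spec (S : Finset (Fin n)) : Vband n = Dband S * rS S :=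
  (Dband_dvd_Vband S).choose_spec

noncomputable def Fnum (k : ℕ) (iv : Fin k → ℕ) (S : Finset (Fin n)) : MvPolynomial (Fin n) ℚ :=
  ∏ l : Fin k, (∑ T ∈ S.powersetCard (l.1 + 1), ∏ m ∈ T, X m) ^ (iv l)

lemma rename_swap_Fnum (k : ℕ) (iv : Fin k → ℕ) (i j : Fin n) (S : Finset (Fin n)) :
    rename (Equiv.swap i j) (Fnum k iv S) = Fnum k iv (S.map (Equiv.swap i j).toEmbedding) := by
  rw [Fnum, Fnum, map_prod]
  refine Finset.prod_congr rfl fun l _ => ?_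
  rw [map_pow, map_sum]
  congr 1
  rw [Finset.powersetCard_map, Finset.sum_map]
  refine Finset.sum_congr rfl fun T _ => ?_
  rw [map_prod]
  rw [show ((Finset.mapEmbedding (Equiv.swap i j).toEmbedding).toEmbedding T : Finset (Fin n))
      = T.map (Equiv.swap i j).toEmbedding from Finset.mapEmbedding_apply, Finset.prod_map]
  simp

lemma not_dvd_Dband_factors {i j : Fin n} (hij : i ≠ j) {S : Finset (Fin n)}
    {s : Finset (Fin n × Fin n)} (hs : s ⊆ S ×ˢ (Finset.univ \ S))
    (hnot : ∀ p ∈ s, ¬(p.1 = i ∧ p.2 = j) ∧ ¬(p.1 = j ∧ p.2 = i)) :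
    ¬ ((X j - X i : MvPolynomial (Fin n) ℚ) ∣ ∏ p ∈ s, (X p.2 - X p.1)) := by
  intro h
  obtain ⟨p, hp, hdvd⟩ := ((prime_X_sub_p hij).dvd_finset_prod_iff _).mp h
  obtain ⟨h1, h2⟩ := Finset.mem_product.mp (hs hp)
  have hne : p.1 ≠ p.2 := fun h => (Finset.mem_sdiff.mp h2).2 (h ▸ h1)
  exact not_dvd_X_sub_p hij hne (hnot p hp).1 (hnot p hp).2 hdvd

lemma fixed_dvd_rS {i j : Fin n} (hij : i ≠ j) {S : Finset (Fin n)}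
    (h : i ∈ S ↔ j ∈ S) : (X j - X i : MvPolynomial (Fin n) ℚ) ∣ rS S := by
  have hnd : ¬ ((X j - X i : MvPolynomial (Fin n) ℚ) ∣ Dband S) := by
    rw [Dband]
    refine not_dvd_Dband_factors hij (le_refl _) fun p hp => ?_
    obtain ⟨h1, h2⟩ := Finset.mem_product.mp hp
    constructor
    · rintro ⟨ha, hb⟩
      exact (Finset.mem_sdiff.mp h2).2 (hb ▸ (h.mp (ha ▸ h1)))
    · rintro ⟨ha, hb⟩
      exact (Finset.mem_sdiff.mp h2).2 (hb ▸ (h.mpr (ha ▸ h1)))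
  have hdV : (X j - X i : MvPolynomial (Fin n) ℚ) ∣ Dband S * rS S := by
    rw [← rS_spec]
    exact (X_sub_dvd_Vband hij)
  rcases (prime_X_sub_p hij).dvd_or_dvd hdV with h' | h'
  · exact absurd h' hnd
  · exact h'

lemma pair_dvd (k : ℕ) (iv : Fin k → ℕ) {i j : Fin n} (hij : i ≠ j) {S : Finset (Fin n)}
    (hiS : i ∈ S) (hjS : j ∉ S) :
    (X j - X i : MvPolynomial (Fin n) ℚ) ∣
      Fnum k iv S * rS S + Fnum k iv (S.map (Equiv.swap i j).toEmbedding)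
        * rS (S.map (Equiv.swap i j).toEmbedding) := by
  set e := (Equiv.swap i j).toEmbedding with he
  set S' := S.map e with hS'
  have hjS' : j ∈ S' := by
    rw [hS']
    have : (Equiv.swap i j) i = j := Equiv.swap_apply_left i j
    exact this ▸ Finset.mem_map_of_mem e hiS
  have hiS' : i ∉ S' := by
    rw [hS']
    intro h
    obtain ⟨x, hx, hxe⟩ := Finset.mem_map.mp h
    have : x = Equiv.swap i j i := by
      apply (Equiv.swap i j).injective
      rw [Equiv.swap_apply_self]
      exact hxe
    rw [this, Equiv.swap_apply_left] at hx
    exact hjS hx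
  have hmem : (i, j) ∈ S ×ˢ (Finset.univ \ S) :=
    Finset.mem_product.mpr ⟨hiS, Finset.mem_sdiff.mpr ⟨Finset.mem_univ j, hjS⟩⟩
  have hmem' : (j, i) ∈ S' ×ˢ (Finset.univ \ S') :=
    Finset.mem_product.mpr ⟨hjS', Finset.mem_sdiff.mpr ⟨Finset.mem_univ i, hiS'⟩⟩
  set A : MvPolynomial (Fin n) ℚ :=
    ∏ p ∈ (S ×ˢ (Finset.univ \ S)).erase (i, j), (X p.2 - X p.1) with hA
  set B : MvPolynomial (Fin n) ℚ :=
    ∏ p ∈ (S' ×ˢ (Finset.univ \ S')).erase (j, i), (X p.2 - X p.1) with hB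
  have hDA : Dband S = (X j - X i) * A := by
    rw [Dband, ← Finset.mul_prod_erase _ _ hmem]
  have hDB : Dband S' = (X i - X j) * B := by
    rw [Dband, ← Finset.mul_prod_erase _ _ hmem']
  have hBA : B = rename (Equiv.swap i j) A := by
    rw [hA, map_prod, hB]
    refine (Finset.prod_nbij' (fun p : Fin n × Fin n => (Equiv.swap i j p.1, Equiv.swap i j p.2))
      (fun p : Fin n × Fin n => (Equiv.swap i j p.1, Equiv.swap i j p.2)) ?_ ?_ ?_ ?_ ?_).symm
    · intro a ha
      obtain ⟨hne, hmem2⟩ := Finset.mem_erase.mp ha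
      obtain ⟨h1, h2⟩ := Finset.mem_product.mp hmem2
      refine Finset.mem_erase.mpr ⟨?_, Finset.mem_product.mpr ⟨?_, ?_⟩⟩
      · intro h
        rw [Prod.ext_iff] at h
        simp only at h
        apply hne
        have h1' : a.1 = i := (Equiv.swap i j).injective (by rw [h.1, Equiv.swap_apply_left])
        have h2' : a.2 = j := (Equiv.swap i j).injective (by rw [h.2, Equiv.swap_apply_right])
        exact Prod.ext h1' h2'
      · exact Finset.mem_map_of_mem e h1
      · rw [Finset.mem_sdiff]
        refine ⟨Finset.mem_univ _, fun hmm => ?_⟩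
        obtain ⟨x, hx, hxe⟩ := Finset.mem_map.mp hmm
        have hx2 : x = a.2 := (Equiv.swap i j).injective hxe
        exact (Finset.mem_sdiff.mp h2).2 (hx2 ▸ hx)
    · intro a ha
      obtain ⟨hne, hmem2⟩ := Finset.mem_erase.mp ha
      obtain ⟨h1, h2⟩ := Finset.mem_product.mp hmem2
      refine Finset.mem_erase.mpr ⟨?_, Finset.mem_product.mpr ⟨?_, ?_⟩⟩
      · intro h
        rw [Prod.ext_iff] at h
        simp only at h
        apply hne
        have h1' : a.1 = j := (Equiv.swap i j).injective (by rw [h.1]; exact (Equiv.swap_apply_right i j).symm)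
        have h2' : a.2 = i := (Equiv.swap i j).injective (by rw [h.2]; exact (Equiv.swap_apply_left i j).symm)
        exact Prod.ext h1' h2'
      · show Equiv.swap i j a.1 ∈ S
        obtain ⟨x, hx, hxe⟩ := Finset.mem_map.mp h1
        have : Equiv.swap i j a.1 = x := by
          rw [← hxe]; exact Equiv.swap_apply_self i j x
        exact this ▸ hx
      · show Equiv.swap i j a.2 ∈ univ \ S
        rw [Finset.mem_sdiff]
        refine ⟨Finset.mem_univ _, fun hmm => ?_⟩
        apply (Finset.mem_sdiff.mp h2).2
        have : a.2 = e (Equiv.swap i j a.2) := (Equiv.swap_apply_self i j a.2).symm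
        rw [this]
        exact Finset.mem_map_of_mem e hmm
    · intro a _
      simp [Equiv.swap_apply_self]
    · intro a _
      simp [Equiv.swap_apply_self]
    · intro a _
      simp
  have hfB : fsub i j B = fsub i j A := by rw [hBA, fsub_rename_swap]
  have hFs : Fnum k iv S' = rename (Equiv.swap i j) (Fnum k iv S) :=
    (rename_swap_Fnum k iv i j S).symm
  have hfF : fsub i j (Fnum k iv S') = fsub i j (Fnum k iv S) := by
    rw [hFs, fsub_rename_swap]
  have hcancel : A * rS S = -(B * rS S') := by
    have h1 : (X j - X i) * (A * rS S) = Vband n := by rw [← mul_assoc, ← hDA, ← rS_spec]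
    have h2 : (X j - X i) * (-(B * rS S')) = Vband n := by
      have h3 : (X i - X j) * (B * rS S') = Vband n := by rw [← mul_assoc, ← hDB, ← rS_spec]
      linear_combination h3
    exact mul_left_cancel₀ (X_sub_ne_zero_p hij) (h1.trans h2.symm)
  have hkey : (X j - X i) ∣ (B * Fnum k iv S - A * Fnum k iv S') := by
    apply dvd_of_fsub_eq_zero
    rw [map_sub, map_mul, map_mul, hfB, hfF]
    ring
  have hident : (A * B) * (Fnum k iv S * rS S + Fnum k iv S' * rS S')
      = (A * rS S) * (B * Fnum k iv S - A * Fnum k iv S') := by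
    linear_combination (A * Fnum k iv S') * hcancel
  have hnA : ¬ ((X j - X i : MvPolynomial (Fin n) ℚ) ∣ A) := by
    rw [hA]
    refine not_dvd_Dband_factors hij (Finset.erase_subset _ _) fun p hp => ?_
    obtain ⟨hne, hmem2⟩ := Finset.mem_erase.mp hp
    obtain ⟨h1, h2⟩ := Finset.mem_product.mp hmem2
    exact ⟨fun ⟨ha, hb⟩ => hne (Prod.ext ha hb), fun ⟨ha, hb⟩ => hjS (ha ▸ h1)⟩
  have hnB : ¬ ((X j - X i : MvPolynomial (Fin n) ℚ) ∣ B) := by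
    rw [hB]
    refine not_dvd_Dband_factors hij (Finset.erase_subset _ _) fun p hp => ?_
    obtain ⟨hne, hmem2⟩ := Finset.mem_erase.mp hp
    obtain ⟨h1, h2⟩ := Finset.mem_product.mp hmem2
    exact ⟨fun ⟨ha, hb⟩ => hiS' (ha ▸ h1), fun ⟨ha, hb⟩ => hne (Prod.ext ha hb)⟩
  have hd2 : (X j - X i : MvPolynomial (Fin n) ℚ) ∣
      A * (B * (Fnum k iv S * rS S + Fnum k iv S' * rS S')) := by
    rw [← mul_assoc, hident]
    exact hkey.mul_left _
  rcases (prime_X_sub_p hij).dvd_or_dvd hd2 with h | h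
  · exact absurd h hnA
  rcases (prime_X_sub_p hij).dvd_or_dvd h with h' | h'
  · exact absurd h' hnB
  exact h'

lemma map_swap_self {i j : Fin n} {S : Finset (Fin n)} (h : (i ∈ S) ↔ (j ∈ S)) :
    S.map (Equiv.swap i j).toEmbedding = S := by
  ext x
  rw [Finset.mem_map_equiv, Equiv.symm_swap]
  rcases eq_or_ne x i with rfl | hxi
  · rw [Equiv.swap_apply_left]; exact h.symm
  · rcases eq_or_ne x j with rfl | hxj
    · rw [Equiv.swap_apply_right]; exact h
    · rw [Equiv.swap_apply_of_ne_of_ne hxi hxj]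

noncomputable def Nc (n k : ℕ) (iv : Fin k → ℕ) : MvPolynomial (Fin n) ℚ :=
  ∑ S ∈ Finset.powersetCard k (Finset.univ : Finset (Fin n)), Fnum k iv S * rS S

lemma X_sub_dvd_Nc (k : ℕ) (iv : Fin k → ℕ) {i j : Fin n} (hij : i ≠ j) :
    (X j - X i : MvPolynomial (Fin n) ℚ) ∣ Nc n k iv := by
  rw [← Ideal.mem_span_singleton (α := MvPolynomial (Fin n) ℚ),
    ← Ideal.Quotient.eq_zero_iff_mem, Nc, map_sum]
  refine Finset.sum_involution (fun S _ => S.map (Equiv.swap i j).toEmbedding) ?_ ?_ ?_ ?_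
  · intro S hS
    beta_reduce
    rw [← map_add, Ideal.Quotient.eq_zero_iff_mem, Ideal.mem_span_singleton]
    by_cases hiS : i ∈ S <;> by_cases hjS : j ∈ S
    · rw [map_swap_self (iff_of_true hiS hjS)]
      exact dvd_add ((fixed_dvd_rS hij (iff_of_true hiS hjS)).mul_left _)
        ((fixed_dvd_rS hij (iff_of_true hiS hjS)).mul_left _)
    · exact pair_dvd k iv hij hiS hjS
    · have h2 := pair_dvd k iv hij.symm hjS hiS
      rw [Equiv.swap_comm j i] at h2
      rw [← neg_dvd, neg_sub]
      exact h2
    · rw [map_swap_self (iff_of_false hiS hjS)]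
      exact dvd_add ((fixed_dvd_rS hij (iff_of_false hiS hjS)).mul_left _)
        ((fixed_dvd_rS hij (iff_of_false hiS hjS)).mul_left _)
  · intro S hS hne heq
    beta_reduce at heq
    apply hne
    have hiff : i ∈ S ↔ j ∈ S := by
      constructor
      · intro hi
        have : (Equiv.swap i j) i ∈ S.map (Equiv.swap i j).toEmbedding :=
          Finset.mem_map_of_mem _ hi
        rwa [Equiv.swap_apply_left, heq] at this
      · intro hj
        have : (Equiv.swap i j) j ∈ S.map (Equiv.swap i j).toEmbedding :=
          Finset.mem_map_of_mem _ hj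
        rwa [Equiv.swap_apply_right, heq] at this
    rw [Ideal.Quotient.eq_zero_iff_mem, Ideal.mem_span_singleton]
    exact (fixed_dvd_rS hij hiff).mul_left _
  · intro S hS
    rw [Finset.mem_powersetCard_univ] at hS ⊢
    rw [Finset.card_map]
    exact hS
  · intro S hS
    ext x
    simp [Finset.mem_map_equiv, Equiv.swap_apply_self]

lemma Vband_dvd_Nc (k : ℕ) (iv : Fin k → ℕ) : Vband n ∣ Nc n k iv := by
  rw [Vband]
  refine prod_primes_dvd_p (fun p hp => ?_) (fun p hp q hq hpq => ?_) (fun p hp => ?_)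
  · exact prime_X_sub_p (Finset.mem_filter.mp hp).2.ne
  · have h1 := (Finset.mem_filter.mp hp).2
    have h2 := (Finset.mem_filter.mp hq).2
    refine not_dvd_X_sub_p h1.ne h2.ne ?_ ?_
    · rintro ⟨ha, hb⟩
      exact hpq (Prod.ext ha hb).symm
    · rintro ⟨ha, hb⟩
      rw [ha] at h2
      rw [hb] at h2
      exact absurd h2 (not_lt.mpr h1.le)
  · exact X_sub_dvd_Nc k iv (Finset.mem_filter.mp hp).2.ne

lemma Sq_monomial (d : Fin n →₀ ℕ) (c : ℚ) : Sq n (monomial d c) = monomial (2 • d) c := by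
  rw [Sq, aeval_monomial, monomial_eq]
  congr 1
  rw [Finsupp.prod, Finsupp.prod, Finsupp.support_smul_eq two_ne_zero]
  refine Finset.prod_congr rfl fun a _ => ?_
  rw [Finsupp.smul_apply, smul_eq_mul, pow_mul]

lemma Sq_ker (r : MvPolynomial (Fin n) ℚ) (h : Sq n r = 0) : r = 0 := by
  have hcoeff : ∀ d : Fin n →₀ ℕ, coeff (2 • d) (Sq n r) = coeff d r := by
    intro d
    conv_lhs => rw [← support_sum_monomial_coeff r]
    rw [map_sum]
    simp_rw [Sq_monomial]
    rw [coeff_sum]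
    simp_rw [coeff_monomial]
    have h2 : ∀ e : Fin n →₀ ℕ, (2 • e = 2 • d) ↔ (e = d) := by
      intro e
      constructor
      · intro he
        ext a
        have := DFunLike.congr_fun he a
        simp only [Finsupp.smul_apply, smul_eq_mul] at this
        omega
      · rintro rfl; rfl
    simp_rw [h2]
    rw [Finset.sum_ite_eq' r.support d (fun e => coeff e r)]
    by_cases hd : d ∈ r.support
    · rw [if_pos hd]
    · rw [if_neg hd, (notMem_support_iff.mp hd)]
  ext d
  rw [← hcoeff d, h, coeff_zero, coeff_zero]

lemma Sq_injective : Function.Injective (Sq n) := by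
  intro p q h
  have h0 : Sq n (p - q) = 0 := by rw [map_sub, h, sub_self]
  exact sub_eq_zero.mp (Sq_ker _ h0)

lemma chern_is_poly (n k : ℕ) (iv : Fin k → ℕ) :
    ∃ c : MvPolynomial (Fin n) ℚ, chernLocSum n k iv
      = algebraMap (MvPolynomial (Fin n) ℚ) (FractionRing (MvPolynomial (Fin n) ℚ)) c := by
  obtain ⟨c, hc⟩ := Vband_dvd_Nc (n := n) k iv
  refine ⟨c, ?_⟩
  have hinj := IsFractionRing.injective (MvPolynomial (Fin n) ℚ)
    (FractionRing (MvPolynomial (Fin n) ℚ))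
  set φ := algebraMap (MvPolynomial (Fin n) ℚ) (FractionRing (MvPolynomial (Fin n) ℚ)) with hφdef
  have hφ : ∀ x : MvPolynomial (Fin n) ℚ, x ≠ 0 → φ x ≠ 0 := fun x hx h0 =>
    hx (hinj (by rw [h0, map_zero]))
  have hV : φ (Vband n) ≠ 0 := hφ _ Vband_ne_zero
  rw [chernLocSum]
  have hterm : ∀ S ∈ Finset.powersetCard k (Finset.univ : Finset (Fin n)),
      φ (∏ l : Fin k, (∑ T ∈ S.powersetCard (l.1 + 1), ∏ m ∈ T, X m) ^ (iv l))
        / φ (∏ a ∈ S, ∏ b ∈ Finset.univ \ S, (X b - X a))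
      = φ (Fnum k iv S * rS S) / φ (Vband n) := by
    intro S _
    rw [← Dband_eq, div_eq_div_iff (hφ _ (Dband_ne_zero S)) hV, ← map_mul, ← map_mul]
    congr 1
    rw [rS_spec S, Fnum]
    ring
  rw [Finset.sum_congr rfl hterm, ← Finset.sum_div, ← map_sum]
  have hNc : (∑ S ∈ Finset.powersetCard k (Finset.univ : Finset (Fin n)),
      Fnum k iv S * rS S) = Nc n k iv := rfl
  rw [hNc, hc, map_mul, mul_div_cancel_left₀ _ hV]

/-- the equivariant Pontryagin localization sum equals `Sq̂` applied to the
equivariant Chern localization sum, where `Sq̂` is the field embedding of the fraction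
field of `ℚ[α₁,…,αₙ]` into itself induced by the (injective) map `Sq`; and in particular
the Pontryagin sum is a polynomial. Since a field homomorphism out of the fraction field
is determined by its restriction to `ℚ[α₁,…,αₙ]`, `Sq̂` is formalized as any ring
homomorphism `ψ` of the fraction field compatible with `Sq` on `ℚ[α₁,…,αₙ]`. -/
theorem equivariant_pontryagin_number_eq_sq_chern_number (n k : ℕ) (hk : k ≤ n)
    (i : Fin k → ℕ) :
    (∀ ψ : FractionRing (MvPolynomial (Fin n) ℚ) →+* FractionRing (MvPolynomial (Fin n) ℚ),
      (∀ p : MvPolynomial (Fin n) ℚ,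
        ψ (algebraMap (MvPolynomial (Fin n) ℚ) (FractionRing (MvPolynomial (Fin n) ℚ)) p)
          = algebraMap (MvPolynomial (Fin n) ℚ) (FractionRing (MvPolynomial (Fin n) ℚ))
              (Sq n p)) →
      pontLocSum n k i = ψ (chernLocSum n k i)) ∧
    pontLocSum n k i ∈ Set.range
      (algebraMap (MvPolynomial (Fin n) ℚ) (FractionRing (MvPolynomial (Fin n) ℚ))) := by
  have h1 : ∀ ψ : FractionRing (MvPolynomial (Fin n) ℚ) →+*
      FractionRing (MvPolynomial (Fin n) ℚ),
      (∀ p : MvPolynomial (Fin n) ℚ,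
        ψ (algebraMap (MvPolynomial (Fin n) ℚ) (FractionRing (MvPolynomial (Fin n) ℚ)) p)
          = algebraMap (MvPolynomial (Fin n) ℚ) (FractionRing (MvPolynomial (Fin n) ℚ))
              (Sq n p)) →
      pontLocSum n k i = ψ (chernLocSum n k i) := by
    intro ψ hψ
    rw [chernLocSum, map_sum, pontLocSum]
    refine Finset.sum_congr rfl fun S hS => ?_
    rw [map_div₀, hψ, hψ]
    congr 2
    · simp only [Sq, map_prod, map_pow, map_sum, aeval_X]
    · simp only [Sq, map_prod, map_sub, map_pow, aeval_X]
  refine ⟨h1, ?_⟩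
  obtain ⟨c, hc⟩ := chern_is_poly n k i
  have hinj : Function.Injective
      ((algebraMap (MvPolynomial (Fin n) ℚ) (FractionRing (MvPolynomial (Fin n) ℚ))).comp
        (Sq n).toRingHom) :=
    (IsFractionRing.injective (MvPolynomial (Fin n) ℚ)
      (FractionRing (MvPolynomial (Fin n) ℚ))).comp Sq_injective
  set ψ := IsFractionRing.lift (K := FractionRing (MvPolynomial (Fin n) ℚ)) hinj with hψdef
  have hψ : ∀ p : MvPolynomial (Fin n) ℚ,
      ψ (algebraMap (MvPolynomial (Fin n) ℚ) (FractionRing (MvPolynomial (Fin n) ℚ)) p)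
        = algebraMap (MvPolynomial (Fin n) ℚ) (FractionRing (MvPolynomial (Fin n) ℚ))
            (Sq n p) := fun p => IsFractionRing.lift_algebraMap hinj p
  rw [h1 ψ hψ, hc, hψ]
  exact ⟨Sq n c, rfl⟩
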